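/- Let q ≡ 1 (mod 4) be a prime power, i ∈ F_q with i² = -1, and let G = PSL(2,q) act on P = (F_q² \ {0})/⟨i⟩. The stabilizer of the point [(1,0)] has order 2q, and hence the orbit of [(1,0)] has size (q²-1)/4; in particular G acts transitively on P. -/

import Mathlib

open Matrix MulAction Pointwise

abbrev SL2 (F : Type) [Field F] := Matrix.SpecialLinearGroup (Fin 2) F

abbrev PSL2 (F : Type) [Field F] := SL2 F ⧸ Subgroup.center (SL2 F)

/-- Nonzero vectors of `F²`. -/
def Vec (F : Type) [Field F] := {v : Fin 2 → F // v ≠ 0}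

/-- Two nonzero vectors are related if they differ by multiplication by a power of `i`. -/
def vrel (F : Type) [Field F] (i : F) (v w : Vec F) : Prop :=
  ∃ n : ℕ, (w.1 : Fin 2 → F) = i ^ n • v.1

/-- The point set `P = (F² \ {0})/⟨i⟩`. -/
def Pts (F : Type) [Field F] (i : F) := Quot (vrel F i)

/-- The class of a nonzero vector in `P`. -/
def mkPt (F : Type) [Field F] (i : F) (v : Fin 2 → F) (hv : v ≠ 0) : Pts F i :=
  Quot.mk _ ⟨v, hv⟩

lemma vec_fst_ne_zero {F : Type} [Field F] (b : F) : ![(1 : F), b] ≠ 0 := by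
  intro h
  simpa using congrFun h 0

lemma vec_snd_ne_zero {F : Type} [Field F] (a : F) : ![a, (1 : F)] ≠ 0 := by
  intro h
  simpa using congrFun h 1

/-- `SL(2,q)` acts on nonzero vectors. -/
def slVecSMul {F : Type} [Field F] (A : SL2 F) (v : Vec F) : Vec F :=
  ⟨(A : Matrix (Fin 2) (Fin 2) F) *ᵥ v.1, by
    intro h
    apply v.2
    have h2 : ((A⁻¹ : SL2 F) : Matrix (Fin 2) (Fin 2) F) *ᵥ
        ((A : Matrix (Fin 2) (Fin 2) F) *ᵥ v.1) = 0 := by rw [h, Matrix.mulVec_zero]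
    rwa [Matrix.mulVec_mulVec, ← Matrix.SpecialLinearGroup.coe_mul, inv_mul_cancel,
      Matrix.SpecialLinearGroup.coe_one, Matrix.one_mulVec] at h2⟩

instance (F : Type) [Field F] (i : F) : SMul (SL2 F) (Pts F i) :=
  ⟨fun A => Quot.map (slVecSMul A) (by
    rintro v w ⟨n, hn⟩
    exact ⟨n, by simp [slVecSMul, hn, Matrix.mulVec_smul]⟩)⟩

instance (F : Type) [Field F] (i : F) : MulAction (SL2 F) (Pts F i) where
  one_smul p := by
    induction p using Quot.ind with | _ v => ?_
    show Quot.mk _ (slVecSMul 1 v) = Quot.mk _ v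
    congr 1
    apply Subtype.ext
    show ((1 : SL2 F) : Matrix (Fin 2) (Fin 2) F) *ᵥ v.1 = v.1
    rw [Matrix.SpecialLinearGroup.coe_one, Matrix.one_mulVec]
  mul_smul A B p := by
    induction p using Quot.ind with | _ v => ?_
    show Quot.mk _ (slVecSMul (A * B) v) = Quot.mk _ (slVecSMul A (slVecSMul B v))
    congr 1
    apply Subtype.ext
    show ((A * B : SL2 F) : Matrix (Fin 2) (Fin 2) F) *ᵥ v.1 =
      (A : Matrix (Fin 2) (Fin 2) F) *ᵥ ((B : Matrix (Fin 2) (Fin 2) F) *ᵥ v.1)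
    rw [Matrix.SpecialLinearGroup.coe_mul, Matrix.mulVec_mulVec]

/-- The stabilizer in `PSL(2,q)` of a point of `P`, i.e. the image in the quotient
`PSL(2,q) = SL(2,q)/center` of the stabilizer in `SL(2,q)`. -/
def pslPtStab (F : Type) [Field F] (i : F) (p : Pts F i) : Subgroup (PSL2 F) :=
  (MulAction.stabilizer (SL2 F) p).map (QuotientGroup.mk' (Subgroup.center (SL2 F)))

/-- The setwise stabilizer in `PSL(2,q)` of a set of points of `P`. -/
def pslSetStab (F : Type) [Field F] (i : F) (s : Set (Pts F i)) : Subgroup (PSL2 F) :=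
  (MulAction.stabilizer (SL2 F) s).map (QuotientGroup.mk' (Subgroup.center (SL2 F)))

/-!
The stabilizer of `[(1,0)]` in `SL(2,q)` consists of the upper triangular matrices whose diagonal
entries are fourth roots of unity, so it has `4q` elements. It contains the centre `{±1}` of
`SL(2,q)` because `-1 = i²`, hence its image in `PSL(2,q)` has order `2q`. Since `SL(2,q)` already
acts transitively on nonzero vectors, the orbit is all of `P`, and orbit-stabilizer together with
`|SL(2,q)| = q(q² - 1)` gives its size.
-/

theorem Subgroup.card_map_mk'_mul_card {G : Type*} [Group G] [Finite G] {N H : Subgroup G}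
    [N.Normal] (hNH : N ≤ H) :
    Nat.card (H.map (QuotientGroup.mk' N)) * Nat.card N = Nat.card H := by
  have hindex : (H.map (QuotientGroup.mk' N)).index = H.index :=
    H.index_map_eq (QuotientGroup.mk'_surjective N) (by rwa [QuotientGroup.ker_mk'])
  refine Nat.eq_of_mul_eq_mul_right (Nat.pos_of_ne_zero H.index_ne_zero_of_finite) ?_
  calc Nat.card (H.map (QuotientGroup.mk' N)) * Nat.card N * H.index
      = Nat.card (H.map (QuotientGroup.mk' N)) * (H.map (QuotientGroup.mk' N)).index
          * Nat.card N := by rw [hindex]; ring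
    _ = Nat.card H * H.index := by
      rw [card_mul_index, card_mul_index, ← card_eq_card_quotient_mul_card_subgroup]

theorem Matrix.card_specialLinearGroup_mul_sub_one (F : Type*) [Field F] [Fintype F] (n : ℕ)
    [NeZero n] :
    Nat.card (SpecialLinearGroup (Fin n) F) * (Fintype.card F - 1) = Nat.card (GL (Fin n) F) := by
  have hker : Nat.card (SpecialLinearGroup (Fin n) F) =
      Nat.card (GeneralLinearGroup.det : GL (Fin n) F →* Fˣ).ker :=
    Nat.card_congr
      { toFun A := ⟨A, SpecialLinearGroup.coeToGL_det A⟩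
        invFun g := ⟨g.1, congrArg Units.val g.2⟩
        left_inv _ := rfl
        right_inv _ := Subtype.ext (Units.ext rfl) }
  rw [hker, Subgroup.card_eq_card_quotient_mul_card_subgroup GeneralLinearGroup.det.ker,
    Nat.card_congr (QuotientGroup.quotientKerEquivOfSurjective _
      GeneralLinearGroup.det_surjective).toEquiv, Nat.card_units,
    Nat.card_eq_fintype_card (α := F), mul_comm]

theorem card_SL2 (F : Type) [Field F] [Fintype F] :
    Nat.card (SL2 F) = Fintype.card F * (Fintype.card F ^ 2 - 1) := by
  have h := Matrix.card_specialLinearGroup_mul_sub_one F 2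
  rw [Matrix.card_GL_field, Fin.prod_univ_two] at h
  have hq := Fintype.one_lt_card (α := F)
  refine Nat.eq_of_mul_eq_mul_right (Nat.sub_pos_of_lt hq) (h.trans ?_)
  simp only [Fin.val_zero, Fin.val_one, pow_zero, pow_one]
  rw [show Fintype.card F ^ 2 - Fintype.card F = Fintype.card F * (Fintype.card F - 1) by
    rw [Nat.mul_sub_one, sq]]
  ring

section Points

variable {F : Type} [Field F] {i : F}

abbrev basePt (F : Type) [Field F] (i : F) : Pts F i := mkPt F i ![1, 0] (vec_fst_ne_zero 0)

theorem smul_mkPt (A : SL2 F) (v : Fin 2 → F) (hv : v ≠ 0) :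
    A • mkPt F i v hv =
      mkPt F i ((A : Matrix (Fin 2) (Fin 2) F) *ᵥ v) (slVecSMul A ⟨v, hv⟩).2 :=
  rfl

theorem vrel_equivalence (hi : IsOfFinOrder i) : Equivalence (vrel F i) where
  refl _ := ⟨0, by simp⟩
  symm := by
    rintro v w ⟨n, hn⟩
    refine ⟨(orderOf i - 1) * n, ?_⟩
    rw [hn, smul_smul, ← pow_add, ← Nat.succ_mul, Nat.succ_eq_add_one,
      Nat.sub_add_cancel hi.orderOf_pos, pow_mul, pow_orderOf_eq_one, one_pow, one_smul]
  trans := by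
    rintro u v w ⟨m, hm⟩ ⟨n, hn⟩
    exact ⟨n + m, by rw [hn, hm, smul_smul, pow_add]⟩

theorem mkPt_eq_mkPt_iff (hi : IsOfFinOrder i) {v w : Fin 2 → F} (hv : v ≠ 0) (hw : w ≠ 0) :
    mkPt F i v hv = mkPt F i w hw ↔ ∃ n : ℕ, w = i ^ n • v :=
  Quot.eq.trans (vrel_equivalence hi).eqvGen_iff

theorem exists_mulVec_eq (v : Fin 2 → F) (hv : v ≠ 0) :
    ∃ A : SL2 F, (A : Matrix (Fin 2) (Fin 2) F) *ᵥ ![1, 0] = v := by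
  by_cases h0 : v 0 = 0
  · have h1 : v 1 ≠ 0 := fun h1 => hv (funext fun j => by fin_cases j <;> simp [h0, h1])
    refine ⟨⟨!![0, -(v 1)⁻¹; v 1, 0], by simp [det_fin_two_of, h1]⟩, ?_⟩
    funext j; fin_cases j <;> simp [h0]
  · refine ⟨⟨!![v 0, 0; v 1, (v 0)⁻¹], by simp [det_fin_two_of, h0]⟩, ?_⟩
    funext j; fin_cases j <;> simp

theorem exists_smul_basePt_eq (x : Pts F i) : ∃ A : SL2 F, A • basePt F i = x := by
  induction x using Quot.ind with | _ v => ?_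
  obtain ⟨A, hA⟩ := exists_mulVec_eq v.1 v.2
  exact ⟨A, congrArg (Quot.mk _) (Subtype.ext hA)⟩

theorem center_le_stabilizer (hi : i ^ 2 = -1) (p : Pts F i) :
    Subgroup.center (SL2 F) ≤ stabilizer (SL2 F) p := by
  intro A hA
  obtain ⟨r, hr, hrA⟩ := Matrix.SpecialLinearGroup.mem_center_iff.mp hA
  obtain ⟨n, hn⟩ : ∃ n : ℕ, i ^ n * r = 1 := by
    rw [Fintype.card_fin, sq_eq_one_iff] at hr
    rcases hr with rfl | rfl
    · exact ⟨0, by simp⟩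
    · exact ⟨2, by simp [hi]⟩
  induction p using Quot.ind with | _ v => ?_
  refine Quot.sound ⟨n, ?_⟩
  show v.1 = i ^ n • ((A : Matrix (Fin 2) (Fin 2) F) *ᵥ v.1)
  rw [← hrA, scalar_apply, ← smul_one_eq_diagonal, smul_mulVec, one_mulVec, smul_smul, hn,
    one_smul]

theorem isPrimitiveRoot_four (hF : ringChar F ≠ 2) (hi : i ^ 2 = -1) : IsPrimitiveRoot i 4 :=
  IsPrimitiveRoot.iff_orderOf.mpr <| orderOf_eq_prime_pow (p := 2) (n := 1)
    (by rw [pow_one, hi]; exact Ring.neg_one_ne_one_of_char_ne_two hF)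
    (by rw [pow_succ, pow_one, pow_mul, hi, neg_one_sq])

theorem mem_stabilizer_basePt_iff (hi : IsPrimitiveRoot i 4) {A : SL2 F} :
    A ∈ stabilizer (SL2 F) (basePt F i) ↔ A 1 0 = 0 ∧ A 0 0 ^ 4 = 1 := by
  rw [mem_stabilizer_iff, basePt, smul_mkPt]
  refine (mkPt_eq_mkPt_iff (hi.isOfFinOrder four_ne_zero) _ _).trans ?_
  simp only [mulVec_fin_two, cons_val_zero, cons_val_one, cons_val_fin_one, mul_one, mul_zero,
    add_zero, smul_cons, smul_eq_mul, smul_empty, funext_iff, Fin.forall_fin_two, zero_eq_mul,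
    pow_eq_zero_iff', hi.ne_zero four_ne_zero, ne_eq, false_and, false_or, exists_and_right]
  constructor
  · rintro ⟨⟨n, h1⟩, h10⟩
    refine ⟨h10, ?_⟩
    have h4 : (i ^ n * A 0 0) ^ 4 = 1 := by rw [← h1, one_pow]
    rwa [mul_pow, ← pow_mul, mul_comm n 4, pow_mul, hi.pow_eq_one, one_pow, one_mul] at h4
  · rintro ⟨h10, h4⟩
    have h00 : A 0 0 ≠ 0 := by rintro h; simp [h] at h4
    obtain ⟨k, -, hk⟩ :=
      hi.eq_pow_of_pow_eq_one (ξ := (A 0 0)⁻¹) (by rw [inv_pow, h4, inv_one])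
    exact ⟨⟨k, by rw [hk, inv_mul_cancel₀ h00]⟩, h10⟩

def upperTriangularSL2 (u : Fˣ) (b : F) : SL2 F :=
  ⟨!![(u : F), b; 0, ((u⁻¹ : Fˣ) : F)], by simp [det_fin_two_of]⟩

noncomputable def stabilizerBasePtEquiv (hi : IsPrimitiveRoot i 4) :
    rootsOfUnity 4 F × F ≃ stabilizer (SL2 F) (basePt F i) :=
  Equiv.ofBijective
    (fun ub => ⟨upperTriangularSL2 ub.1 ub.2, (mem_stabilizer_basePt_iff hi).2
      ⟨rfl, by
        simpa [upperTriangularSL2] using congrArg Units.val ((mem_rootsOfUnity _ _).1 ub.1.2)⟩⟩)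
    ⟨by
      rintro ⟨u, b⟩ ⟨u', b'⟩ h
      have hentries := congrArg
        (fun A : stabilizer (SL2 F) (basePt F i) => ((A : SL2 F) 0 0, (A : SL2 F) 0 1)) h
      simp only [upperTriangularSL2, Prod.mk.injEq, of_apply, cons_val', cons_val_zero,
        cons_val_one, cons_val_fin_one] at hentries
      exact Prod.ext (Subtype.ext (Units.ext hentries.1)) hentries.2, by
      rintro ⟨A, hA⟩
      obtain ⟨h10, h00⟩ := (mem_stabilizer_basePt_iff hi).1 hA
      refine ⟨(rootsOfUnity.mkOfPowEq _ h00, A 0 1), Subtype.ext ?_⟩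
      have hdet : A 0 0 * A 1 1 = 1 := by
        have hdet := A.2
        rwa [det_fin_two, h10, mul_zero, sub_zero] at hdet
      ext j k
      fin_cases j <;> fin_cases k <;>
        simp [upperTriangularSL2, h10, eq_inv_of_mul_eq_one_right hdet]⟩

theorem card_stabilizer_basePt [Fintype F] (hi : IsPrimitiveRoot i 4) :
    Nat.card (stabilizer (SL2 F) (basePt F i)) = 4 * Fintype.card F := by
  rw [← Nat.card_congr (stabilizerBasePtEquiv hi), Nat.card_prod, hi.card_rootsOfUnity,
    Nat.card_eq_fintype_card]

theorem card_center_SL2 (hF : ringChar F ≠ 2) : Nat.card (Subgroup.center (SL2 F)) = 2 := by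
  rw [Nat.card_congr (SpecialLinearGroup.center_equiv_rootsOfUnity' (0 : Fin 2)).toEquiv,
    Fintype.card_fin]
  exact (IsPrimitiveRoot.neg_one (ringChar F) hF).card_rootsOfUnity

theorem card_pslPtStab_mul_two [Finite F] (hF : ringChar F ≠ 2) (hi : i ^ 2 = -1)
    (p : Pts F i) :
    Nat.card (pslPtStab F i p) * 2 = Nat.card (stabilizer (SL2 F) p) := by
  have h := Subgroup.card_map_mk'_mul_card (center_le_stabilizer hi p)
  rwa [card_center_SL2 hF] at h

end Points

/-- The stabilizer of `[(1,0)]` in `PSL(2,q)` has order `2q`, the orbit of `[(1,0)]`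
has size `(q²-1)/4`, and the action on `P` is transitive. -/
theorem stmt_4 (q : ℕ) (F : Type) [Field F] [Fintype F]
    (hcard : Fintype.card F = q) (hq : q % 4 = 1)
    (i : F) (hi : i ^ 2 = -1) :
    Nat.card (pslPtStab F i (mkPt F i ![1, 0] (vec_fst_ne_zero 0))) = 2 * q ∧
    Nat.card (MulAction.orbit (SL2 F) (mkPt F i ![1, 0] (vec_fst_ne_zero 0))) = (q ^ 2 - 1) / 4 ∧
    ∀ x : Pts F i, ∃ A : SL2 F, A • (mkPt F i ![1, 0] (vec_fst_ne_zero 0)) = x := by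
  subst hcard
  change Nat.card (pslPtStab F i (basePt F i)) = _ ∧ Nat.card (orbit (SL2 F) (basePt F i)) = _ ∧
    ∀ x, ∃ A : SL2 F, A • basePt F i = x
  have hF : ringChar F ≠ 2 := fun h => by
    have := FiniteField.even_card_iff_char_two.mp h
    omega
  have hstab := card_stabilizer_basePt (isPrimitiveRoot_four hF hi)
  refine ⟨?_, ?_, exists_smul_basePt_eq⟩
  · have := card_pslPtStab_mul_two hF hi (basePt F i)
    omega
  · have horbit := (stabilizer (SL2 F) (basePt F i)).card_mul_index
    rw [index_stabilizer, ← Nat.card_coe_set_eq, hstab, card_SL2] at horbit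
    have h4 : Nat.card (orbit (SL2 F) (basePt F i)) * 4 = Fintype.card F ^ 2 - 1 :=
      Nat.eq_of_mul_eq_mul_left Fintype.card_pos (by linarith)
    omega
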